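/- arXiv:1701.08313 — 2 statements merged into one kernel-verified Lean document; each statement's English description precedes it below -/
import Mathlib

section
/- Let H, W be finite-dimensional real inner product spaces, K : H → H symmetric positive semidefinite, G : H → W surjective, and suppose K is positive definite on ker G. Then for every d̄ ∈ H the saddle-point system K d + G* λ = 0, G d = G d̄ has a unique solution (d, λ) ∈ H × W. -/
open RealInnerProductSpace

theorem saddle_point_well_posed
    (H W : Type*) [NormedAddCommGroup H] [InnerProductSpace ℝ H]
    [NormedAddCommGroup W] [InnerProductSpace ℝ W]
    [FiniteDimensional ℝ H] [FiniteDimensional ℝ W]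
    (K : H →ₗ[ℝ] H)
    (hsymm : ∀ x y : H, ⟪K x, y⟫ = ⟪x, K y⟫)
    (hpsd : ∀ x : H, 0 ≤ ⟪K x, x⟫)
    (G : H →ₗ[ℝ] W) (hsurj : Function.Surjective G)
    (hpd : ∀ v : H, v ∈ LinearMap.ker G → v ≠ 0 → 0 < ⟪K v, v⟫)
    (dbar : H) :
    ∃! p : H × W, K p.1 + (LinearMap.adjoint G) p.2 = 0 ∧ G p.1 = G dbar := by
  classical
  set A := LinearMap.adjoint G with hA
  have key : ∀ (d : H) (l : W), K d + A l = 0 → G d = 0 → d = 0 ∧ l = 0 := by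
    intro d l h1 h2
    have hd : d = 0 := by
      by_contra hd
      have hAl : ⟪A l, d⟫ = 0 := by
        rw [hA, LinearMap.adjoint_inner_left, h2, inner_zero_right]
      have h0 : ⟪K d + A l, d⟫ = 0 := by rw [h1, inner_zero_left]
      rw [inner_add_left, hAl, add_zero] at h0
      exact absurd h0 (ne_of_gt (hpd d (LinearMap.mem_ker.mpr h2) hd))
    have hAl0 : A l = 0 := by rw [hd] at h1; simpa using h1
    have hl : l = 0 := by
      have hGx : ∀ x : H, ⟪l, G x⟫ = 0 := fun x => by
        rw [← LinearMap.adjoint_inner_left, ← hA, hAl0, inner_zero_left]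
      have h0 : ∀ w : W, ⟪l, w⟫ = 0 := fun w => by
        obtain ⟨x, hx⟩ := hsurj w; rw [← hx]; exact hGx x
      exact inner_self_eq_zero.mp (h0 l)
    exact ⟨hd, hl⟩
  let T : H × W →ₗ[ℝ] H × W :=
    LinearMap.prod
      (K.comp (LinearMap.fst ℝ H W) + A.comp (LinearMap.snd ℝ H W))
      (G.comp (LinearMap.fst ℝ H W))
  have hTval : ∀ p : H × W, T p = (K p.1 + A p.2, G p.1) := fun p => rfl
  have hTinj : Function.Injective T := by
    rw [injective_iff_map_eq_zero]
    intro p hp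
    rw [hTval, Prod.ext_iff] at hp
    obtain ⟨h1, h2⟩ := key p.1 p.2 hp.1 hp.2
    exact Prod.ext h1 h2
  have hTsurj : Function.Surjective T := LinearMap.injective_iff_surjective.mp hTinj
  obtain ⟨p, hp⟩ := hTsurj (0, G dbar)
  simp only [hTval, Prod.mk.injEq] at hp
  refine ⟨p, ⟨hp.1, hp.2⟩, ?_⟩
  intro q hq
  apply hTinj
  simp only [hTval, Prod.mk.injEq]
  exact ⟨by rw [hq.1, hp.1], by rw [hq.2, hp.2]⟩
end

section
/- Consequence of the Hill–Mandel identity: under the hypotheses of the previous lemma and with microstrain ε_{ij} = 𝕀_{ijkl} ε̄_{kl} + (1/2)(∂χ_i^{kl}/∂y_j + ∂χ_j^{kl}/∂y_i) ε̄_{kl} for a constant symmetric macrostrain ε̄ and Y-periodic fluctuation fields χ^{kl}, the average microscopic stress power equals the macroscopic stress power: (1/|Y|) ∫_Y σ : ε dy = σ̄ : ε̄, where σ̄ := (1/|Y|) ∫_Y σ dy. -/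
open Finset MeasureTheory Matrix

/-- Kronecker delta. -/
def kdelta {d : ℕ} (i j : Fin d) : ℝ := if i = j then 1 else 0

/-- The fourth-order symmetrizer tensor. -/
noncomputable def symmetrizer {d : ℕ} (i j k l : Fin d) : ℝ :=
  (1 / 2) * (kdelta i k * kdelta j l + kdelta i l * kdelta j k)

/-- The unit cell `Y = [0,1]^d` in `ℝ^d`. -/
def unitCell (d : ℕ) : Set (EuclideanSpace ℝ (Fin d)) :=
  {y | ∀ k, y k ∈ Set.Icc (0 : ℝ) 1}

section HillAux

variable {d : ℕ}

noncomputable abbrev eqE (d : ℕ) := EuclideanSpace.equiv (Fin d) ℝ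

lemma hasFDerivAt_comp_symm (g : EuclideanSpace ℝ (Fin d) → ℝ) (hg : ContDiff ℝ (⊤ : ℕ∞) g)
    (x : Fin d → ℝ) :
    HasFDerivAt (fun p : Fin d → ℝ => g ((eqE d).symm p))
      ((fderiv ℝ g ((eqE d).symm x)).comp ((eqE d).symm : (Fin d → ℝ) →L[ℝ] _)) x :=
  ((hg.differentiable (by simp)).differentiableAt.hasFDerivAt).comp x
    ((eqE d).symm.hasFDerivAt)

lemma unitCell_eq_preimage :
    unitCell d = ((MeasurableEquiv.toLp 2 (Fin d → ℝ)).symm) ⁻¹' (Set.Icc 0 1) := by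
  ext y
  simp [unitCell, Set.mem_Icc, Pi.le_def, Set.mem_preimage, forall_and,
    MeasurableEquiv.toLp]
  exact Iff.rfl

lemma setIntegral_transfer (G : EuclideanSpace ℝ (Fin d) → ℝ) :
    ∫ y in unitCell d, G y = ∫ x in Set.Icc (0 : Fin d → ℝ) 1, G ((eqE d).symm x) := by
  rw [unitCell_eq_preimage]
  have h := (EuclideanSpace.volume_preserving_symm_measurableEquiv_toLp (Fin d)).setIntegral_preimage_emb
    (MeasurableEquiv.toLp 2 (Fin d → ℝ)).symm.measurableEmbedding
    (fun x => G ((eqE d).symm x)) (Set.Icc 0 1)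
  rw [← h]
  rfl

lemma insertNth_zero_add_single {d : ℕ} (i : Fin (d+1)) (x : Fin d → ℝ) :
    ((eqE (d+1)).symm (i.insertNth 0 x) + EuclideanSpace.single i 1 : EuclideanSpace ℝ (Fin (d+1)))
      = (eqE (d+1)).symm (i.insertNth 1 x) := by
  ext k
  rcases eq_or_ne k i with rfl | hne
  · simp [PiLp.add_apply]
  · obtain ⟨m, rfl⟩ := Fin.exists_succAbove_eq hne
    simp [PiLp.add_apply, Fin.insertNth_apply_succAbove, Fin.succAbove_ne]

lemma integral_div_periodic_zero {d : ℕ} (F : Fin d → EuclideanSpace ℝ (Fin d) → ℝ)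
    (hF : ∀ j, ContDiff ℝ (⊤ : ℕ∞) (F j))
    (hper : ∀ j (y : EuclideanSpace ℝ (Fin d)) (n : Fin d),
      F j (y + EuclideanSpace.single n 1) = F j y) :
    ∫ y in unitCell d, ∑ j, fderiv ℝ (F j) y (EuclideanSpace.single j 1) = 0 := by
  cases d with
  | zero => simp
  | succ n =>
    rw [setIntegral_transfer]
    set es := ((eqE (n+1)).symm : (Fin (n+1) → ℝ) → EuclideanSpace ℝ (Fin (n+1))) with hes
    have hcont : ∀ j, Continuous fun x : Fin (n+1) → ℝ =>
        fderiv ℝ (F j) (es x) (EuclideanSpace.single j 1) := by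
      intro j
      exact (((hF j).continuous_fderiv (by simp)).comp (eqE (n+1)).symm.continuous).clm_apply
        continuous_const
    have key := integral_divergence_of_hasFDerivAt_off_countable'
      (a := (0 : Fin (n+1) → ℝ)) (b := 1) (E := ℝ)
      (by intro i; norm_num)
      (fun j x => F j (es x))
      (fun j x => (fderiv ℝ (F j) (es x)).comp ((eqE (n+1)).symm : (Fin (n+1) → ℝ) →L[ℝ] _))
      ∅ Set.countable_empty
      (fun j => (((hF j).continuous).comp (eqE (n+1)).symm.continuous).continuousOn)
      (fun x _ j => hasFDerivAt_comp_symm (F j) (hF j) x)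
      (by
        apply (ContinuousOn.integrableOn_compact isCompact_Icc)
        exact (continuous_finset_sum _ fun j _ => hcont j).continuousOn)
    have hL : (fun x : Fin (n+1) → ℝ => ∑ j, fderiv ℝ (F j) (es x) (EuclideanSpace.single j 1))
        = fun x => ∑ j, ((fderiv ℝ (F j) (es x)).comp
            ((eqE (n+1)).symm : (Fin (n+1) → ℝ) →L[ℝ] _)) (Pi.single j 1) := rfl
    rw [show (∫ x in Set.Icc (0 : Fin (n+1) → ℝ) 1,
          ∑ j, fderiv ℝ (F j) (es x) (EuclideanSpace.single j 1)) =
        ∫ x in Set.Icc (0 : Fin (n+1) → ℝ) 1,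
          ∑ j, ((fderiv ℝ (F j) (es x)).comp
            ((eqE (n+1)).symm : (Fin (n+1) → ℝ) →L[ℝ] _)) (Pi.single j 1) from by rw [hL]]
    rw [key]
    apply Finset.sum_eq_zero
    intro i _
    have : ∀ x : Fin n → ℝ, F i (es (i.insertNth ((1 : Fin (n+1) → ℝ) i) x))
        = F i (es (i.insertNth ((0 : Fin (n+1) → ℝ) i) x)) := by
      intro x
      have h1 : (1 : Fin (n+1) → ℝ) i = (1:ℝ) := rfl
      have h0 : (0 : Fin (n+1) → ℝ) i = (0:ℝ) := rfl
      rw [h1, h0, hes, ← insertNth_zero_add_single i x, hper]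
    simp only [this, sub_self]

lemma double_ite_sum {d : ℕ} (f : Fin d → Fin d → ℝ) (i j : Fin d) :
    ∑ k, ∑ l, (if i = k ∧ j = l then f k l else 0) = f i j := by
  have h : ∀ k, (∑ l, if i = k ∧ j = l then f k l else 0) = if i = k then f k j else 0 := by
    intro k
    by_cases h : i = k
    · subst h; simp [Finset.sum_ite_eq]
    · simp [h]
  simp [h, Finset.sum_ite_eq]

lemma symm_contract {d : ℕ} (εbar : Matrix (Fin d) (Fin d) ℝ) (hεbar : εbarᵀ = εbar)
    (i j : Fin d) : ∑ k, ∑ l, symmetrizer i j k l * εbar k l = εbar i j := by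
  have hs : εbar j i = εbar i j := by
    have := congrFun (congrFun hεbar i) j
    simpa [Matrix.transpose_apply] using this
  have hterm : ∀ k l : Fin d, symmetrizer i j k l * εbar k l
      = (1/2) * (if i = k ∧ j = l then εbar k l else 0)
        + (1/2) * (if i = l ∧ j = k then εbar k l else 0) := by
    intro k l
    unfold symmetrizer kdelta
    split_ifs <;> first | tauto | ring
  simp only [hterm, Finset.sum_add_distrib, ← Finset.mul_sum, double_ite_sum]
  have h2 : ∑ k, ∑ l, (if i = l ∧ j = k then εbar k l else 0) = εbar j i := by
    rw [Finset.sum_comm]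
    exact double_ite_sum (fun l k => εbar k l) i j
  rw [h2, hs, double_ite_sum εbar i j]; ring

lemma sum4_swap {d : ℕ} (f : Fin d → Fin d → Fin d → Fin d → ℝ) :
    ∑ i, ∑ j, ∑ k, ∑ l, f i j k l = ∑ k, ∑ l, ∑ i, ∑ j, f i j k l :=
  calc ∑ i, ∑ j, ∑ k, ∑ l, f i j k l
      = ∑ i, ∑ k, ∑ l, ∑ j, f i j k l := Finset.sum_congr rfl (fun i _ => by
        rw [Finset.sum_comm]
        exact Finset.sum_congr rfl (fun k _ => Finset.sum_comm))
    _ = ∑ k, ∑ i, ∑ l, ∑ j, f i j k l := Finset.sum_comm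
    _ = ∑ k, ∑ l, ∑ i, ∑ j, f i j k l := Finset.sum_congr rfl (fun k _ => Finset.sum_comm)

lemma isCompact_unitCell (d : ℕ) : IsCompact (unitCell d) := by
  have himg : unitCell d = ((eqE d).symm) '' (Set.Icc 0 1) := by
    ext y
    constructor
    · intro hy
      refine ⟨eqE d y, ?_, by simp⟩
      simp only [Set.mem_Icc, Pi.le_def]
      exact ⟨fun k => (hy k).1, fun k => (hy k).2⟩
    · rintro ⟨x, hx, rfl⟩ k
      simp only [Set.mem_Icc, Pi.le_def] at hx
      exact ⟨hx.1 k, hx.2 k⟩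
  rw [himg]
  exact isCompact_Icc.image (eqE d).symm.continuous

end HillAux

theorem hill_mandel_consequence (d : ℕ)
    (σ : EuclideanSpace ℝ (Fin d) → Matrix (Fin d) (Fin d) ℝ)
    (χ : Fin d → Fin d → EuclideanSpace ℝ (Fin d) → EuclideanSpace ℝ (Fin d))
    (εbar : Matrix (Fin d) (Fin d) ℝ) (hεbar : εbarᵀ = εbar)
    (hσsmooth : ∀ i j, ContDiff ℝ (⊤ : ℕ∞) (fun y => σ y i j))
    (hσsymm : ∀ y i j, σ y i j = σ y j i)
    (hσper : ∀ (y : EuclideanSpace ℝ (Fin d)) (k : Fin d),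
      σ (y + EuclideanSpace.single k 1) = σ y)
    (hdivfree : ∀ (y : EuclideanSpace ℝ (Fin d)) (i : Fin d),
      ∑ j, fderiv ℝ (fun z => σ z i j) y (EuclideanSpace.single j 1) = 0)
    (hχsmooth : ∀ k l i, ContDiff ℝ (⊤ : ℕ∞) (fun y => χ k l y i))
    (hχper : ∀ (k l : Fin d) (y : EuclideanSpace ℝ (Fin d)) (n : Fin d),
      χ k l (y + EuclideanSpace.single n 1) = χ k l y)
    (ε : EuclideanSpace ℝ (Fin d) → Matrix (Fin d) (Fin d) ℝ)
    (hε : ∀ y i j, ε y i j = ∑ k, ∑ l,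
      (symmetrizer i j k l
        + (1 / 2) * (fderiv ℝ (fun z => χ k l z i) y (EuclideanSpace.single j 1)
          + fderiv ℝ (fun z => χ k l z j) y (EuclideanSpace.single i 1)))
        * εbar k l) :
    ∫ y in unitCell d, ∑ i, ∑ j, σ y i j * ε y i j
      = ∑ i, ∑ j, (∫ y in unitCell d, σ y i j) * εbar i j := by
  -- notation
  set D : Fin d → Fin d → Fin d → Fin d → EuclideanSpace ℝ (Fin d) → ℝ :=
    fun k l i j y => fderiv ℝ (fun z => χ k l z i) y (EuclideanSpace.single j 1) with hD
  set W : Fin d → Fin d → EuclideanSpace ℝ (Fin d) → ℝ :=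
    fun k l y => ∑ i, ∑ j, σ y i j * D k l i j y with hW
  have hK := isCompact_unitCell d
  -- continuity facts
  have hσc : ∀ i j, Continuous (fun y => σ y i j) := fun i j => (hσsmooth i j).continuous
  have hDc : ∀ k l i j, Continuous (D k l i j) := fun k l i j =>
    ((hχsmooth k l i).continuous_fderiv (by simp)).clm_apply continuous_const
  have hWc : ∀ k l, Continuous (W k l) := fun k l =>
    continuous_finset_sum _ fun i _ => continuous_finset_sum _ fun j _ =>
      ((hσc i j).mul (hDc k l i j))
  -- pointwise identity
  have hpt : ∀ y, ∑ i, ∑ j, σ y i j * ε y i j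
      = (∑ i, ∑ j, σ y i j * εbar i j) + ∑ k, ∑ l, εbar k l * W k l y := by
    intro y
    have hε' : ∀ i j, ε y i j = εbar i j
        + ∑ k, ∑ l, (1/2) * (D k l i j y + D k l j i y) * εbar k l := by
      intro i j
      rw [hε]
      simp only [add_mul, Finset.sum_add_distrib, symm_contract εbar hεbar]
      rfl
    have hterm : ∀ i j, σ y i j * ε y i j = σ y i j * εbar i j
        + ∑ k, ∑ l, σ y i j * ((1/2) * (D k l i j y + D k l j i y) * εbar k l) := by
      intro i j
      rw [hε' i j, mul_add, Finset.mul_sum]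
      congr 1
      exact Finset.sum_congr rfl fun k _ => Finset.mul_sum _ _ _
    simp only [hterm, Finset.sum_add_distrib]
    congr 1
    rw [sum4_swap]
    refine Finset.sum_congr rfl fun k _ => Finset.sum_congr rfl fun l _ => ?_
    have hswap : ∑ i, ∑ j, σ y i j * D k l j i y = ∑ i, ∑ j, σ y i j * D k l i j y := by
      rw [Finset.sum_comm]
      exact Finset.sum_congr rfl fun a _ => Finset.sum_congr rfl fun b _ => by
        rw [hσsymm y b a]
    have hexp : ∀ i j, σ y i j * ((1/2) * (D k l i j y + D k l j i y) * εbar k l)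
        = (1/2) * εbar k l * (σ y i j * D k l i j y)
          + (1/2) * εbar k l * (σ y i j * D k l j i y) := fun i j => by ring
    simp only [hexp, Finset.sum_add_distrib, ← Finset.mul_sum]
    rw [hswap, hW]
    ring
  -- the fluctuation integrals vanish
  have hWzero : ∀ k l, ∫ y in unitCell d, W k l y = 0 := by
    intro k l
    set F : Fin d → EuclideanSpace ℝ (Fin d) → ℝ :=
      fun j y => ∑ i, σ y i j * χ k l y i with hF
    have hFsmooth : ∀ j, ContDiff ℝ (⊤ : ℕ∞) (F j) := fun j =>
      ContDiff.sum fun i _ => (hσsmooth i j).mul (hχsmooth k l i)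
    have hFper : ∀ j (y : EuclideanSpace ℝ (Fin d)) (n : Fin d),
        F j (y + EuclideanSpace.single n 1) = F j y := by
      intro j y n
      refine Finset.sum_congr rfl fun i _ => ?_
      rw [hσper y n, hχper k l y n]
    have hderiv : ∀ y j, fderiv ℝ (F j) y (EuclideanSpace.single j 1)
        = ∑ i, (χ k l y i * fderiv ℝ (fun z => σ z i j) y (EuclideanSpace.single j 1)
            + σ y i j * D k l i j y) := by
      intro y j
      have hF' : HasFDerivAt (F j)
          (∑ i, (σ y i j • fderiv ℝ (fun z => χ k l z i) y
            + χ k l y i • fderiv ℝ (fun z => σ z i j) y)) y := by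
        refine HasFDerivAt.fun_sum fun i _ => ?_
        exact (((hσsmooth i j).differentiable (by simp) y).hasFDerivAt).mul
          (((hχsmooth k l i).differentiable (by simp) y).hasFDerivAt)
      rw [hF'.fderiv]
      simp only [ContinuousLinearMap.sum_apply, ContinuousLinearMap.add_apply,
        ContinuousLinearMap.smul_apply, smul_eq_mul, hD]
      exact Finset.sum_congr rfl fun i _ => by ring
    have hWrepr : ∀ y, W k l y = ∑ j, fderiv ℝ (F j) y (EuclideanSpace.single j 1) := by
      intro y
      simp only [hderiv, Finset.sum_add_distrib]
      have h1 : ∑ j, ∑ i, χ k l y i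
          * fderiv ℝ (fun z => σ z i j) y (EuclideanSpace.single j 1) = 0 := by
        rw [Finset.sum_comm]
        refine Finset.sum_eq_zero fun i _ => ?_
        rw [← Finset.mul_sum, hdivfree y i, mul_zero]
      rw [h1, zero_add, hW, Finset.sum_comm]
    rw [show (fun y => W k l y) = fun y => ∑ j, fderiv ℝ (F j) y (EuclideanSpace.single j 1)
      from funext hWrepr]
    exact integral_div_periodic_zero F hFsmooth hFper
  -- integrability
  have hIA : IntegrableOn (fun y => ∑ i, ∑ j, σ y i j * εbar i j) (unitCell d) := by
    apply ContinuousOn.integrableOn_compact hK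
    exact (continuous_finset_sum _ fun i _ => continuous_finset_sum _ fun j _ =>
      (hσc i j).mul continuous_const).continuousOn
  have hIB : IntegrableOn (fun y => ∑ k, ∑ l, εbar k l * W k l y) (unitCell d) := by
    apply ContinuousOn.integrableOn_compact hK
    exact (continuous_finset_sum _ fun k _ => continuous_finset_sum _ fun l _ =>
      continuous_const.mul (hWc k l)).continuousOn
  -- assemble
  calc ∫ y in unitCell d, ∑ i, ∑ j, σ y i j * ε y i j
      = ∫ y in unitCell d, ((∑ i, ∑ j, σ y i j * εbar i j)
          + ∑ k, ∑ l, εbar k l * W k l y) := by simp only [hpt]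
    _ = (∫ y in unitCell d, ∑ i, ∑ j, σ y i j * εbar i j)
          + ∫ y in unitCell d, ∑ k, ∑ l, εbar k l * W k l y := integral_add hIA hIB
    _ = ∑ i, ∑ j, (∫ y in unitCell d, σ y i j) * εbar i j := by
        have hB : ∫ y in unitCell d, ∑ k, ∑ l, εbar k l * W k l y = 0 := by
          rw [integral_finset_sum _ (fun k _ => ?_)]
          · refine Finset.sum_eq_zero fun k _ => ?_
            rw [integral_finset_sum _ (fun l _ => ?_)]
            · refine Finset.sum_eq_zero fun l _ => ?_
              rw [MeasureTheory.integral_const_mul, hWzero k l, mul_zero]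
            · exact (ContinuousOn.integrableOn_compact hK
                (continuous_const.mul (hWc k l)).continuousOn)
          · exact (ContinuousOn.integrableOn_compact hK
              (continuous_finset_sum _ fun l _ =>
                continuous_const.mul (hWc k l)).continuousOn)
        rw [hB, add_zero]
        rw [integral_finset_sum _ (fun i _ => ?_)]
        · refine Finset.sum_congr rfl fun i _ => ?_
          rw [integral_finset_sum _ (fun j _ => ?_)]
          · exact Finset.sum_congr rfl fun j _ => MeasureTheory.integral_mul_const _ _
          · exact (ContinuousOn.integrableOn_compact hK
              ((hσc i j).mul continuous_const).continuousOn)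
        · exact (ContinuousOn.integrableOn_compact hK
            (continuous_finset_sum _ fun j _ =>
              (hσc i j).mul continuous_const).continuousOn)
end
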